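/- arXiv:1908.01870 — 4 statements merged into one kernel-verified Lean document; each statement's English description precedes it below -/
import Mathlib

section
/- The Hugoniot curve through a point (t₀, z₀, 0) of the characteristic surface intersects the plane Y = 0 exactly at z = z₀ and z = z₁ := -(t₀(1+z₀²) - z₀)/(t₀z₀(1+z₀²) + 1), and z₀ = z₁ if and only if t₀ = 0. That is, the numerator of the Y-component of the Hugoniot curve through (t₀, z₀, 0), namely -2c(z - z₀)((t₀z₀(1+z₀²)+1)z + (t₀(1+z₀²) - z₀)), vanishes exactly at these two roots, which coincide iff t₀ = 0. -/
theorem mul_add_eq_zero_iff_eq_neg_div {K : Type*} [Field K] {a b z : K} (ha : a ≠ 0) :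
    a * z + b = 0 ↔ z = -b / a := by
  rw [eq_div_iff ha, add_eq_zero_iff_eq_neg, mul_comm]

theorem hugoniot_factor_eq_zero_at_base_iff (t0 z0 : ℝ) :
    (t0 * z0 * (1 + z0 ^ 2) + 1) * z0 + (t0 * (1 + z0 ^ 2) - z0) = 0 ↔ t0 = 0 := by
  have hpos : (1 + z0 ^ 2) ^ 2 ≠ 0 := by positivity
  rw [show (t0 * z0 * (1 + z0 ^ 2) + 1) * z0 + (t0 * (1 + z0 ^ 2) - z0)
      = t0 * (1 + z0 ^ 2) ^ 2 by ring, mul_eq_zero, or_iff_left hpos]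

theorem stmt3_general (c t0 z0 : ℝ) (hc : 0 < c)
    (hD : t0 * z0 * (1 + z0 ^ 2) + 1 ≠ 0) :
    let z1 := -(t0 * (1 + z0 ^ 2) - z0) / (t0 * z0 * (1 + z0 ^ 2) + 1)
    (∀ z : ℝ,
      -2 * c * (z - z0) * ((t0 * z0 * (1 + z0 ^ 2) + 1) * z + (t0 * (1 + z0 ^ 2) - z0)) = 0 ↔
        z = z0 ∨ z = z1) ∧
    (z0 = z1 ↔ t0 = 0) := by
  intro z1
  refine ⟨fun z => ?_, ?_⟩
  · simp only [mul_eq_zero, hc.ne', sub_eq_zero, mul_add_eq_zero_iff_eq_neg_div hD]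
    norm_num [z1]
  · rw [← mul_add_eq_zero_iff_eq_neg_div hD, hugoniot_factor_eq_zero_at_base_iff]

/-- The Hugoniot curve through a characteristic point `(t₀, z₀, 0)` meets the
plane `Y = 0` exactly at `z = z₀` and `z = z₁`, and these coincide iff `t₀ = 0`. -/
theorem stmt3 (b1 c t0 z0 : ℝ) (hb : 1 < b1) (hc : 0 < c)
    (hD : t0 * z0 * (1 + z0 ^ 2) + 1 ≠ 0) :
    let z1 := -(t0 * (1 + z0 ^ 2) - z0) / (t0 * z0 * (1 + z0 ^ 2) + 1)
    (∀ z : ℝ,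
      -2 * c * (z - z0) * ((t0 * z0 * (1 + z0 ^ 2) + 1) * z + (t0 * (1 + z0 ^ 2) - z0)) = 0 ↔
        z = z0 ∨ z = z1) ∧
    (z0 = z1 ↔ t0 = 0) :=
  stmt3_general c t0 z0 hc hD
end

section
/- Let s_ch(z) = (s₃z³ - s₂z² - s₁z + s₀)/(b₁(z₀²+1)((b₁-1)z²+1)) with s₃ = b₁c(t₀z₀(1+z₀²)+1)(1+b₁), s₂ = c(t₀z₀⁴+2z₀-t₀)(1+b₁), s₁ = b₁c(t₀z₀³-2z₀²+t₀z₀-1), s₀ = c(t₀z₀⁴+2z₀-t₀), and let z₁ = -(t₀(1+z₀²)-z₀)/(t₀z₀(1+z₀²)+1). Then s_ch(z₀) - s_ch(z₁) = c(z₀²+1)t₀. In particular, for c > 0, s_ch(z₀) > s_ch(z₁) if and only if t₀ > 0. -/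
set_option maxHeartbeats 2000000


/-- The difference of characteristic speeds at the two intersection points of a
Hugoniot curve with the characteristic surface is `c(z₀²+1)t₀`; for `c > 0`
the slow/fast ordering is determined by the sign of `t₀`. -/
theorem stmt4 (b1 c t0 z0 : ℝ) (hb : 1 < b1) (hc : 0 < c)
    (hD : t0 * z0 * (1 + z0 ^ 2) + 1 ≠ 0) :
    let s3 := b1 * c * (t0 * z0 * (1 + z0 ^ 2) + 1) * (1 + b1)
    let s2 := c * (t0 * z0 ^ 4 + 2 * z0 - t0) * (1 + b1)
    let s1 := b1 * c * (t0 * z0 ^ 3 - 2 * z0 ^ 2 + t0 * z0 - 1)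
    let s0 := c * (t0 * z0 ^ 4 + 2 * z0 - t0)
    let sch : ℝ → ℝ := fun z =>
      (s3 * z ^ 3 - s2 * z ^ 2 - s1 * z + s0) / (b1 * (z0 ^ 2 + 1) * ((b1 - 1) * z ^ 2 + 1))
    let z1 := -(t0 * (1 + z0 ^ 2) - z0) / (t0 * z0 * (1 + z0 ^ 2) + 1)
    sch z0 - sch z1 = c * (z0 ^ 2 + 1) * t0 ∧ (sch z0 > sch z1 ↔ 0 < t0) := by
  intro s3 s2 s1 s0 sch z1
  have hb0 : (0:ℝ) < b1 := by linarith
  have hz0 : (0:ℝ) < z0 ^ 2 + 1 := by positivity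
  have hden : ∀ z : ℝ, (b1 - 1) * z ^ 2 + 1 ≠ 0 := by
    intro z
    have h1 : (0:ℝ) ≤ (b1 - 1) * z ^ 2 := mul_nonneg (by linarith) (sq_nonneg z)
    have : (0:ℝ) < (b1 - 1) * z ^ 2 + 1 := by linarith
    linarith
  have hD0 : b1 * (z0 ^ 2 + 1) * ((b1 - 1) * z0 ^ 2 + 1) ≠ 0 := by
    have := hden z0
    positivity
  have hD1 : b1 * (z0 ^ 2 + 1) * ((b1 - 1) * z1 ^ 2 + 1) ≠ 0 := by
    have h1 : (0:ℝ) ≤ (b1 - 1) * z1 ^ 2 := mul_nonneg (by linarith) (sq_nonneg z1)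
    have h2 : (0:ℝ) < (b1 - 1) * z1 ^ 2 + 1 := by linarith
    positivity
  have key : sch z0 - sch z1 = c * (z0 ^ 2 + 1) * t0 := by
    show (s3 * z0 ^ 3 - s2 * z0 ^ 2 - s1 * z0 + s0) /
        (b1 * (z0 ^ 2 + 1) * ((b1 - 1) * z0 ^ 2 + 1)) -
      (s3 * z1 ^ 3 - s2 * z1 ^ 2 - s1 * z1 + s0) /
        (b1 * (z0 ^ 2 + 1) * ((b1 - 1) * z1 ^ 2 + 1)) = c * (z0 ^ 2 + 1) * t0
    rw [div_sub_div _ _ hD0 hD1, div_eq_iff (mul_ne_zero hD0 hD1)]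
    simp only [z1, s3, s2, s1, s0]
    field_simp
    ring
  refine ⟨key, ?_⟩
  constructor
  · intro h
    have := sub_pos.mpr h
    rw [key] at this
    nlinarith [mul_pos hc hz0]
  · intro h
    have : 0 < c * (z0 ^ 2 + 1) * t0 := by positivity
    rw [← key] at this
    linarith
end

section
/- The derivative with respect to z, evaluated at z = z₀, of the characteristic speed s_ch(z) = (s₃z³ - s₂z² - s₁z + s₀)/(b₁(z₀²+1)((b₁-1)z²+1)) (with s₃ = b₁c(t₀z₀(1+z₀²)+1)(1+b₁), s₂ = c(t₀z₀⁴+2z₀-t₀)(1+b₁), s₁ = b₁c(t₀z₀³-2z₀²+t₀z₀-1), s₀ = c(t₀z₀⁴+2z₀-t₀)) equals c(((b₁+1)z₀⁵+(b₁+4)z₀³+3z₀)t₀ + (b₁-1)z₀² + 1)/((z₀²+1)((b₁-1)z₀²+1)). In particular, since the denominator is positive, the sign of s_ch'(z₀) equals the sign of the inflection-locus expression ((b₁+1)z₀⁵+(b₁+4)z₀³+3z₀)t₀ + (b₁-1)z₀² + 1. -/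
/-!
By the quotient rule, `s_ch'(z₀)` is a rational expression whose numerator, after cancelling the
factor `b₁ (z₀² + 1)` shared with the denominator, is `c` times the inflection-locus polynomial.
The remaining denominator `(z₀² + 1)((b₁ - 1)z₀² + 1)` is positive for `b₁ > 1`, so the signs agree.
-/

theorem hasDerivAt_cubic_div_quadratic {𝕜 : Type*} [NontriviallyNormedField 𝕜]
    {a₃ a₂ a₁ a₀ d q x : 𝕜} (h : d * (q * x ^ 2 + 1) ≠ 0) :
    HasDerivAt (fun z => (a₃ * z ^ 3 - a₂ * z ^ 2 - a₁ * z + a₀) / (d * (q * z ^ 2 + 1)))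
      (((3 * a₃ * x ^ 2 - 2 * a₂ * x - a₁) * (q * x ^ 2 + 1) -
          (a₃ * x ^ 3 - a₂ * x ^ 2 - a₁ * x + a₀) * (2 * q * x)) / (d * (q * x ^ 2 + 1) ^ 2)) x := by
  have hnum : HasDerivAt (fun z => a₃ * z ^ 3 - a₂ * z ^ 2 - a₁ * z + a₀)
      (3 * a₃ * x ^ 2 - 2 * a₂ * x - a₁) x := by
    refine (((((hasDerivAt_pow 3 x).const_mul a₃).sub ((hasDerivAt_pow 2 x).const_mul a₂)).sub
      ((hasDerivAt_id x).const_mul a₁)).add_const a₀).congr_deriv ?_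
    ring
  have hden : HasDerivAt (fun z => d * (q * z ^ 2 + 1)) (d * (2 * q * x)) x := by
    refine ((((hasDerivAt_pow 2 x).const_mul q).add_const 1).const_mul d).congr_deriv ?_
    ring
  refine (hnum.div hden h).congr_deriv ?_
  field_simp

theorem sign_mul_div_iff {α : Type*} [Field α] [LinearOrder α] [IsStrictOrderedRing α]
    {c d : α} (hc : 0 < c) (hd : 0 < d) (e : α) :
    (0 < c * e / d ↔ 0 < e) ∧ (c * e / d < 0 ↔ e < 0) := by
  refine ⟨by rw [div_pos_iff_of_pos_right hd, mul_pos_iff_of_pos_left hc], ?_⟩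
  rw [div_lt_iff₀ hd, zero_mul]
  exact ⟨fun h => neg_of_mul_neg_right h hc.le, mul_neg_of_pos_of_neg hc⟩

/-- The derivative of the characteristic speed at `z = z₀` equals (up to the
positive denominator) the inflection-locus expression; in particular its sign
equals the sign of that expression. -/
theorem stmt11 (b1 c t0 z0 : ℝ) (hb : 1 < b1) (hc : 0 < c) :
    let s3 := b1 * c * (t0 * z0 * (1 + z0 ^ 2) + 1) * (1 + b1)
    let s2 := c * (t0 * z0 ^ 4 + 2 * z0 - t0) * (1 + b1)
    let s1 := b1 * c * (t0 * z0 ^ 3 - 2 * z0 ^ 2 + t0 * z0 - 1)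
    let s0 := c * (t0 * z0 ^ 4 + 2 * z0 - t0)
    let sch : ℝ → ℝ := fun z =>
      (s3 * z ^ 3 - s2 * z ^ 2 - s1 * z + s0) / (b1 * (z0 ^ 2 + 1) * ((b1 - 1) * z ^ 2 + 1))
    deriv sch z0 =
      c * (((b1 + 1) * z0 ^ 5 + (b1 + 4) * z0 ^ 3 + 3 * z0) * t0 + (b1 - 1) * z0 ^ 2 + 1) /
        ((z0 ^ 2 + 1) * ((b1 - 1) * z0 ^ 2 + 1)) ∧
    ((0 < deriv sch z0 ↔
        0 < ((b1 + 1) * z0 ^ 5 + (b1 + 4) * z0 ^ 3 + 3 * z0) * t0 + (b1 - 1) * z0 ^ 2 + 1) ∧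
     (deriv sch z0 < 0 ↔
        ((b1 + 1) * z0 ^ 5 + (b1 + 4) * z0 ^ 3 + 3 * z0) * t0 + (b1 - 1) * z0 ^ 2 + 1 < 0)) := by
  intro s3 s2 s1 s0 sch
  have hb0 : 0 < b1 := one_pos.trans hb
  have hb1 : 0 < b1 - 1 := sub_pos.mpr hb
  have hden : 0 < (z0 ^ 2 + 1) * ((b1 - 1) * z0 ^ 2 + 1) := by positivity
  have hderiv : deriv sch z0 =
      c * (((b1 + 1) * z0 ^ 5 + (b1 + 4) * z0 ^ 3 + 3 * z0) * t0 + (b1 - 1) * z0 ^ 2 + 1) /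
        ((z0 ^ 2 + 1) * ((b1 - 1) * z0 ^ 2 + 1)) := by
    rw [(hasDerivAt_cubic_div_quadratic (by positivity)).deriv]
    field_simp
    ring
  rw [hderiv]
  exact ⟨rfl, sign_mul_div_iff hc hden _⟩
end

section
/- For the Hugoniot curve through a characteristic point (t₀, z₀, 0), with Y-component Y(z) = -2c(z-z₀)((t₀z₀(1+z₀²)+1)z + (t₀(1+z₀²)-z₀))/((z₀²+1)((b₁-1)z²+1)), the derivative dY/dz at z = z₀ equals -2c(z₀²+1)t₀/((b₁-1)z₀²+1). In particular, for c > 0 and b₁ > 1, dY/dz(z₀) > 0 if and only if t₀ < 0. -/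
/-!
`Y` has a simple zero at `z₀`: it is `(z - z₀)` times a cofactor continuous at `z₀`, so
`Y'(z₀)` is the cofactor at `z₀`. There the linear factor of the numerator collapses to
`t₀ (1 + z₀²)²`, and since `c > 0` and `(b₁ - 1) z₀² + 1 > 0` the sign of `Y'(z₀)` is that of `-t₀`.
-/

theorem hasDerivAt_sub_mul_of_continuousAt {𝕜 : Type*} [NontriviallyNormedField 𝕜]
    {g : 𝕜 → 𝕜} {a : 𝕜} (hg : ContinuousAt g a) :
    HasDerivAt (fun z => (z - a) * g z) (g a) a := by
  rw [hasDerivAt_iff_tendsto_slope]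
  refine (hg.tendsto.mono_left nhdsWithin_le_nhds).congr' ?_
  filter_upwards [self_mem_nhdsWithin] with z hz
  rw [slope_def_field, sub_self, zero_mul, sub_zero, mul_div_cancel_left₀ _ (sub_ne_zero.2 hz)]

theorem mul_div_pos_iff_of_neg_of_pos {α : Type*} [Field α] [LinearOrder α]
    [IsStrictOrderedRing α] {k d t : α} (hk : k < 0) (hd : 0 < d) :
    0 < k * t / d ↔ t < 0 := by
  rw [div_pos_iff_of_pos_right hd, ← neg_mul_neg, mul_pos_iff_of_pos_left (neg_pos.2 hk), neg_pos]

/-- The derivative at `z = z₀` of the `Y`-component of the Hugoniot curve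
through a characteristic point `(t₀, z₀, 0)`, and its sign. -/
theorem stmt12 (b1 c t0 z0 : ℝ) (hb : 1 < b1) (hc : 0 < c) :
    let Y : ℝ → ℝ := fun z =>
      -2 * c * (z - z0) * ((t0 * z0 * (1 + z0 ^ 2) + 1) * z + (t0 * (1 + z0 ^ 2) - z0)) /
        ((z0 ^ 2 + 1) * ((b1 - 1) * z ^ 2 + 1))
    deriv Y z0 = -2 * c * (z0 ^ 2 + 1) * t0 / ((b1 - 1) * z0 ^ 2 + 1) ∧
    (0 < deriv Y z0 ↔ t0 < 0) := by
  intro Y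
  set g : ℝ → ℝ := fun z =>
    -2 * c * ((t0 * z0 * (1 + z0 ^ 2) + 1) * z + (t0 * (1 + z0 ^ 2) - z0)) /
      ((z0 ^ 2 + 1) * ((b1 - 1) * z ^ 2 + 1))
  have hd : 0 < (b1 - 1) * z0 ^ 2 + 1 := by nlinarith [sq_nonneg z0]
  have hY : Y = fun z => (z - z0) * g z := by
    funext z
    simp only [Y, g]
    ring
  have hg : ContinuousAt g z0 := by
    refine ContinuousAt.div (by fun_prop) (by fun_prop) ?_
    positivity
  have hg0 : g z0 = -2 * c * (z0 ^ 2 + 1) * t0 / ((b1 - 1) * z0 ^ 2 + 1) := by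
    simp only [g]
    field_simp
    ring
  have hderiv : deriv Y z0 = -2 * c * (z0 ^ 2 + 1) * t0 / ((b1 - 1) * z0 ^ 2 + 1) := by
    rw [hY, (hasDerivAt_sub_mul_of_continuousAt hg).deriv, hg0]
  refine ⟨hderiv, ?_⟩
  have hk : -2 * c * (z0 ^ 2 + 1) < 0 := by nlinarith [sq_nonneg z0]
  rw [hderiv, mul_div_pos_iff_of_neg_of_pos hk hd]
end
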